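/- For 0 ≤ r < 1 and 0 < ε < 2, ∫_{{t : |e^{it} − 1| ≤ ε}} P(r, t) dt = (2/π) arctan( ((1+r)/(1−r)) · ε / (√(2−ε)·√(2+ε)) ), where P(r,t) = (1−r²)/(2π(1−2r cos t + r²)) and the integral is over t ∈ (−π, π] with |e^{it}−1| ≤ ε. -/

import Mathlib

/-
Since `1 - 2 r cos t + r² = (1 - r)² cos²(t/2) + (1 + r)² sin²(t/2)`, the kernel `P(r, ·)` is the
derivative of `arctan ((1 + r)/(1 - r) · tan (t/2)) / π` on `(-π, π)`. As
`|e^{it} - 1| = 2 |sin (t/2)|`, the arc is `[-t₀, t₀]` with `t₀ = 2 arcsin (ε/2)`, and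
`tan (arcsin (ε/2)) = ε / √(4 - ε²)`.
-/

open MeasureTheory Real Complex Set

noncomputable def poissonKernelDisk (r t : ℝ) : ℝ :=
  (1 - r ^ 2) / (2 * π * (1 - 2 * r * Real.cos t + r ^ 2))

namespace Real

lemma one_sub_two_mul_mul_cos_add_sq (r t : ℝ) :
    1 - 2 * r * cos t + r ^ 2 = (1 - r) ^ 2 * cos (t / 2) ^ 2 + (1 + r) ^ 2 * sin (t / 2) ^ 2 := by
  have hcos : cos t = cos (t / 2) ^ 2 - sin (t / 2) ^ 2 := by
    rw [← cos_two_mul', mul_div_cancel₀ t two_ne_zero]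
  rw [hcos]
  linear_combination (-(1 + r ^ 2)) * sin_sq_add_cos_sq (t / 2)

lemma one_sub_two_mul_mul_cos_add_sq_pos {r : ℝ} (hr : |r| < 1) (t : ℝ) :
    0 < 1 - 2 * r * cos t + r ^ 2 := by
  have h : r * cos t ≤ |r| := by
    calc r * cos t ≤ |r * cos t| := le_abs_self _
      _ = |r| * |cos t| := abs_mul r _
      _ ≤ |r| := mul_le_of_le_one_right (abs_nonneg r) (abs_cos_le_one t)
  nlinarith [sq_abs r]

end Real

lemma continuous_poissonKernelDisk {r : ℝ} (hr : |r| < 1) : Continuous (poissonKernelDisk r) :=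
  continuous_const.div (by fun_prop) fun t =>
    (mul_pos (by positivity) (one_sub_two_mul_mul_cos_add_sq_pos hr t)).ne'

noncomputable def poissonKernelDiskPrimitive (r u : ℝ) : ℝ :=
  Real.arctan ((1 + r) / (1 - r) * Real.tan (u / 2)) / π

lemma hasDerivAt_poissonKernelDiskPrimitive {r t : ℝ} (hr : r ≠ 1) (ht : Real.cos (t / 2) ≠ 0) :
    HasDerivAt (poissonKernelDiskPrimitive r) (poissonKernelDisk r t) t := by
  have hderiv := (((Real.hasDerivAt_tan ht).comp t ((hasDerivAt_id t).div_const 2)).const_mul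
    ((1 + r) / (1 - r))).arctan.div_const π
  refine hderiv.congr_deriv ?_
  simp only [Function.comp_def, id]
  rw [poissonKernelDisk, one_sub_two_mul_mul_cos_add_sq, Real.tan_eq_sin_div_cos]
  field_simp
  ring

lemma poissonKernelDiskPrimitive_neg (r u : ℝ) :
    poissonKernelDiskPrimitive r (-u) = -poissonKernelDiskPrimitive r u := by
  simp only [poissonKernelDiskPrimitive, neg_div, Real.tan_neg, mul_neg, Real.arctan_neg]

lemma integral_Icc_poissonKernelDisk {r a : ℝ} (hr : |r| < 1) (ha₀ : 0 ≤ a) (ha : a < π) :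
    ∫ t in Icc (-a) a, poissonKernelDisk r t
      = 2 / π * Real.arctan ((1 + r) / (1 - r) * Real.tan (a / 2)) := by
  have hcos : ∀ t ∈ uIcc (-a) a, Real.cos (t / 2) ≠ 0 := fun t ht => by
    rw [uIcc_of_le (by linarith)] at ht
    exact (Real.cos_pos_of_mem_Ioo ⟨by linarith [ht.1], by linarith [ht.2]⟩).ne'
  rw [integral_Icc_eq_integral_Ioc, ← intervalIntegral.integral_of_le (by linarith),
    intervalIntegral.integral_eq_sub_of_hasDerivAt
      (fun t ht => hasDerivAt_poissonKernelDiskPrimitive (abs_lt.1 hr).2.ne (hcos t ht))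
      ((continuous_poissonKernelDisk hr).intervalIntegrable _ _),
    poissonKernelDiskPrimitive_neg, poissonKernelDiskPrimitive]
  ring

lemma setOf_norm_exp_I_mul_sub_one_le {ε : ℝ} (hε₀ : -2 ≤ ε) (hε₂ : ε < 2) :
    {t ∈ Ioc (-π) π | ‖Complex.exp (Complex.I * t) - 1‖ ≤ ε}
      = Icc (-(2 * Real.arcsin (ε / 2))) (2 * Real.arcsin (ε / 2)) := by
  have harcsin : Real.arcsin (ε / 2) < π / 2 := Real.arcsin_lt_pi_div_two.2 (by linarith)
  have hle_arcsin : ∀ x ∈ Icc (-(π / 2)) (π / 2), x ≤ Real.arcsin (ε / 2) ↔ Real.sin x ≤ ε / 2 :=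
    fun x hx => Real.le_arcsin_iff_sin_le hx ⟨by linarith, by linarith⟩
  ext t
  simp only [mem_ofPred_eq, mem_Ioc, mem_Icc, Complex.norm_exp_I_mul_ofReal_sub_one, norm_mul,
    Real.norm_eq_abs, abs_two]
  constructor
  · rintro ⟨⟨ht₁, ht₂⟩, hsin⟩
    have hsin' := abs_le.1 (show |Real.sin (t / 2)| ≤ ε / 2 by linarith)
    have hpos := (hle_arcsin (t / 2) ⟨by linarith, by linarith⟩).2 hsin'.2
    have hneg := (hle_arcsin (-(t / 2)) ⟨by linarith, by linarith⟩).2 (by rw [Real.sin_neg]; linarith)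
    constructor <;> linarith
  · rintro ⟨ht₁, ht₂⟩
    have hpos := (hle_arcsin (t / 2) ⟨by linarith, by linarith⟩).1 (by linarith)
    have hneg := (hle_arcsin (-(t / 2)) ⟨by linarith, by linarith⟩).1 (by linarith)
    rw [Real.sin_neg] at hneg
    exact ⟨⟨by linarith, by linarith⟩, by linarith [abs_le.2 ⟨by linarith, hpos⟩]⟩

lemma tan_arcsin_half {ε : ℝ} (hε : ε ≤ 2) :
    Real.tan (Real.arcsin (ε / 2)) = ε / (Real.sqrt (2 - ε) * Real.sqrt (2 + ε)) := by
  rw [Real.tan_arcsin, ← Real.sqrt_mul (by linarith),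
    show 1 - (ε / 2) ^ 2 = (2 - ε) * (2 + ε) / 2 ^ 2 by ring, Real.sqrt_div' _ (by positivity),
    Real.sqrt_sq zero_le_two]
  ring

/-- Exact value of the Poisson integral over the arc `|e^{it} - 1| ≤ ε`. -/
theorem stmt_8 (r ε : ℝ) (hr0 : 0 ≤ r) (hr1 : r < 1) (hε0 : 0 < ε) (hε2 : ε < 2) :
    ∫ t in {t ∈ Set.Ioc (-π) π |
        ‖Complex.exp (Complex.I * t) - 1‖ ≤ ε},
      poissonKernelDisk r t
      = 2 / π * Real.arctan ((1 + r) / (1 - r) * ε /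
          (Real.sqrt (2 - ε) * Real.sqrt (2 + ε))) := by
  have hr : |r| < 1 := abs_lt.2 ⟨by linarith, hr1⟩
  have harcsin : Real.arcsin (ε / 2) < π / 2 := Real.arcsin_lt_pi_div_two.2 (by linarith)
  rw [setOf_norm_exp_I_mul_sub_one_le (by linarith) hε2,
    integral_Icc_poissonKernelDisk hr
      (mul_nonneg zero_le_two (Real.arcsin_nonneg.2 (by linarith))) (by linarith),
    mul_div_cancel_left₀ _ two_ne_zero, tan_arcsin_half hε2.le, mul_div_assoc]
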